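/- A bounded weighted shift on a forkless directed forest is power hyponormal if and only if it is hyponormal. -/

import Mathlib

open scoped ENNReal Classical
noncomputable section

universe u

namespace ShiftsPaper

/-- ℓ²(V) over ℂ. -/
abbrev Hs (V : Type u) : Type u := lp (fun _ : V => ℂ) 2

/-- canonical orthonormal basis vector -/
def ev {V : Type u} (v : V) : Hs V := lp.single 2 v 1

/-- A directed forest: a nonempty vertex set together with a parent function `p`
such that any vertex lying on a `p`-cycle is a fixed point of `p`. -/
def IsDirectedForest {V : Type u} (p : V → V) : Prop :=
  Nonempty V ∧ ∀ n : ℕ, 1 ≤ n → ∀ v : V, p^[n] v = v → p v = v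

def rootSet {V : Type u} (p : V → V) : Set V := {v | p v = v}

def children {V : Type u} (p : V → V) (v : V) : Set V := {u | p u = v ∧ u ≠ v}

/-- the set of `k`-th children `Chi^⟨k⟩(v)` -/
def childrenIter {V : Type u} (p : V → V) : ℕ → V → Set V
  | 0, v => {v}
  | k + 1, v => {u | p^[k + 1] u = v ∧ p^[k] u ≠ v}

/-- descendants -/
def des {V : Type u} (p : V → V) (v : V) : Set V := ⋃ n : ℕ, childrenIter p n v

lemma self_mem_des {V : Type u} (p : V → V) (v : V) : v ∈ des p v :=
  Set.mem_iUnion.2 ⟨0, by simp [childrenIter]⟩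

/-- `u` and `v` belong to the same tree (connected component) of the forest -/
def sameTree {V : Type u} (p : V → V) (u v : V) : Prop :=
  ∃ m n : ℕ, p^[m] u = p^[n] v

/-- A directed tree is a connected directed forest. -/
def IsDirectedTree {V : Type u} (p : V → V) : Prop :=
  IsDirectedForest p ∧ ∀ u v : V, sameTree p u v

def Leafless {V : Type u} (p : V → V) : Prop := Function.Surjective p

def LocallyCountable {V : Type u} (p : V → V) : Prop :=
  ∀ v : V, (children p v).Countable

/-- every non-root vertex has exactly one child -/
def Forkless {V : Type u} (p : V → V) : Prop :=
  ∀ v : V, p v ≠ v → ∃! u : V, u ∈ children p v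

/-- a system of weights: vanishing at the roots -/
def WeightSystem {V : Type u} (p : V → V) (lam : V → ℂ) : Prop :=
  ∀ v : V, p v = v → lam v = 0

/-- a proper system of weights: vanishing exactly at the roots -/
def ProperWeights {V : Type u} (p : V → V) (lam : V → ℂ) : Prop :=
  ∀ v : V, lam v = 0 ↔ p v = v

/-- `S` is the (bounded) weighted shift on the forest `(V, p)` with weights `lam`:
`(S f)(v) = lam v • f (p v)`. -/
def IsWeightedShift {V : Type u} (p : V → V) (lam : V → ℂ)
    (S : Hs V →L[ℂ] Hs V) : Prop :=
  ∀ (f : Hs V) (v : V), (S f : ∀ _ : V, ℂ) v = lam v * (f : ∀ _ : V, ℂ) (p v)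

def Hyponormal {E : Type u} [NormedAddCommGroup E] [InnerProductSpace ℂ E]
    [CompleteSpace E] (A : E →L[ℂ] E) : Prop :=
  (ContinuousLinearMap.adjoint A ∘L A - A ∘L ContinuousLinearMap.adjoint A).IsPositive

def PowerHyponormal {E : Type u} [NormedAddCommGroup E] [InnerProductSpace ℂ E]
    [CompleteSpace E] (A : E →L[ℂ] E) : Prop :=
  ∀ n : ℕ, 1 ≤ n → Hyponormal (A ^ n)

/-- `A` is subnormal: it is the restriction of a bounded normal operator on a larger
Hilbert space to an invariant subspace. -/
def Subnormal {E : Type u} [NormedAddCommGroup E] [InnerProductSpace ℂ E]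
    [CompleteSpace E] (A : E →L[ℂ] E) : Prop :=
  ∃ (K : Type u) (_ : NormedAddCommGroup K) (_ : InnerProductSpace ℂ K)
    (_ : CompleteSpace K) (J : E →ₗᵢ[ℂ] K) (N : K →L[ℂ] K),
    IsStarNormal N ∧ ∀ x : E, N (J x) = J (A x)

/-- `μ` is a representing measure (a positive Borel measure on `[0,∞)`) for the
sequence `a`. -/
def IsRepresentingMeasure (μ : MeasureTheory.Measure ℝ) (a : ℕ → ℝ) : Prop :=
  μ (Set.Iio 0) = 0 ∧
    ∀ n : ℕ, ENNReal.ofReal (a n) = ∫⁻ x : ℝ, ENNReal.ofReal (x ^ n) ∂μ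

def IsStieltjesMomentSeq (a : ℕ → ℝ) : Prop :=
  (∀ n, 0 ≤ a n) ∧ ∃ μ : MeasureTheory.Measure ℝ, IsRepresentingMeasure μ a

/-- parent function of the `k`-step backward extension `T⟨k⟩`; the new vertices
`ω_1, …, ω_k` are encoded as `Sum.inr ⟨0⟩, …, Sum.inr ⟨k-1⟩`. -/
def extParent {V : Type u} (p : V → V) (ω : V) (k : ℕ) :
    V ⊕ Fin k → V ⊕ Fin k
  | Sum.inl v =>
      if v = ω then (if h : 0 < k then Sum.inr ⟨0, h⟩ else Sum.inl ω)
      else Sum.inl (p v)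
  | Sum.inr j =>
      if h : (j : ℕ) + 1 < k then Sum.inr ⟨(j : ℕ) + 1, h⟩ else Sum.inr j

/-- weights on `T⟨k⟩`: weight `mu 0 = λ'_{ω_0}` at the old root `ω`, weight
`mu (j+1) = λ'_{ω_{j+1}}` at `ω_{j+1}` for `j+1 < k`, weight `0` at the new root `ω_k`. -/
def extWeights {V : Type u} (lam : V → ℂ) (ω : V) (k : ℕ) (mu : Fin k → ℂ) :
    V ⊕ Fin k → ℂ
  | Sum.inl v => if v = ω then (if h : 0 < k then mu ⟨0, h⟩ else 0) else lam v
  | Sum.inr j => if h : (j : ℕ) + 1 < k then mu ⟨(j : ℕ) + 1, h⟩ else 0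

/-- `S` (the weighted shift with weights `lam` on a tree rooted at `ω`) admits a
subnormal `k`-step backward extension. -/
def AdmitsSubnormalBackExt {V : Type u} (p : V → V) (lam : V → ℂ) (ω : V)
    (S : Hs V →L[ℂ] Hs V) (k : ℕ) : Prop :=
  Subnormal S ∧
    ∃ mu : Fin k → ℂ, (∀ j, mu j ≠ 0) ∧
      ∃ S' : Hs (V ⊕ Fin k) →L[ℂ] Hs (V ⊕ Fin k),
        IsWeightedShift (extParent p ω k) (extWeights lam ω k mu) S' ∧ Subnormal S'

def AdmitsPowerHypoBackExt {V : Type u} (p : V → V) (lam : V → ℂ) (ω : V)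
    (S : Hs V →L[ℂ] Hs V) (k : ℕ) : Prop :=
  PowerHyponormal S ∧
    ∃ mu : Fin k → ℂ, (∀ j, mu j ≠ 0) ∧
      ∃ S' : Hs (V ⊕ Fin k) →L[ℂ] Hs (V ⊕ Fin k),
        IsWeightedShift (extParent p ω k) (extWeights lam ω k mu) S' ∧
        PowerHyponormal S'

/-- the parent function of the subforest `T|_W`. -/
def restrictParent {V : Type u} (p : V → V) (W : Set V) : W → W :=
  fun v => if h : p ↑v ∈ W then ⟨p ↑v, h⟩ else v

/-- the weights `λ→_u` on the subtree `T_(u→)` of descendants of `u`. -/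
def subWeights {V : Type u} (lam : V → ℂ) (u : V) (W : Set V) : W → ℂ :=
  fun v => if (v : V) = u then 0 else lam ↑v

/-- parent function of the rooted sum of the family `{(V j, p j)}` with roots `ω j`;
the new root is `none`. -/
def rsParent {J : Type u} {V : J → Type u} (p : ∀ j, V j → V j) (ω : ∀ j, V j) :
    Option (Σ j, V j) → Option (Σ j, V j)
  | none => none
  | some ⟨j, v⟩ => if v = ω j then none else some ⟨j, p j v⟩

/-- weights on the rooted sum: `0` at the new root, `θ j` at the old root `ω j`. -/
def rsWeights {J : Type u} {V : J → Type u} (lam : ∀ j, V j → ℂ) (ω : ∀ j, V j)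
    (θ : J → ℂ) : Option (Σ j, V j) → ℂ
  | none => 0
  | some ⟨j, v⟩ => if v = ω j then θ j else lam j v

/-- iterated weights `λ^(k)_v`. -/
def iterWeight {V : Type u} (p : V → V) (lam : V → ℂ) : ℕ → V → ℂ
  | 0, _ => 1
  | k + 1, v => iterWeight p lam k (p v) * lam v

/-- parent function `p^[k]` of the `k`-th power forest `T^k`. -/
def kPowParent {V : Type u} (p : V → V) (k : ℕ) (v : V) : V :=
  if p (p^[k - 1] v) = p^[k - 1] v then v else p^[k] v


lemma ofReal_norm_eq_coe_nnnorm {E : Type*} [SeminormedAddCommGroup E] (a : E) :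
    ENNReal.ofReal ‖a‖ = (‖a‖₊ : ℝ≥0∞) := ENNReal.ofReal_eq_coe_nnreal (norm_nonneg a)

section Aux
open scoped NNReal
local notation "⟪" x ", " y "⟫" => @inner ℂ _ _ x y

variable {V : Type u} (p : V → V) (lam : V → ℂ)

/-- the unique child of a non-root vertex -/
def chld (hfork : Forkless p) (v : V) : V :=
  if h : p v ≠ v then (hfork v h).choose else v

variable (hfork : Forkless p)

lemma chld_parent {v : V} (hv : p v ≠ v) : p (chld p hfork v) = v := by
  rw [chld, dif_pos hv]; exact (hfork v hv).choose_spec.1.1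

lemma chld_ne {v : V} (hv : p v ≠ v) : chld p hfork v ≠ v := by
  rw [chld, dif_pos hv]; exact (hfork v hv).choose_spec.1.2

lemma eq_chld {v w : V} (hv : p v ≠ v) (hw : p w = v) : w = chld p hfork v := by
  have hwv : w ≠ v := by rintro rfl; exact hv hw
  rw [chld, dif_pos hv]; exact (hfork v hv).choose_spec.2 w ⟨hw, hwv⟩

lemma chld_nonroot {v : V} (hv : p v ≠ v) : p (chld p hfork v) ≠ chld p hfork v := by
  rw [chld_parent p hfork hv]; exact (chld_ne p hfork hv).symm

lemma chld_iter_nonroot {v : V} (hv : p v ≠ v) (k : ℕ) :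
    p ((chld p hfork)^[k] v) ≠ (chld p hfork)^[k] v := by
  induction k with
  | zero => exact hv
  | succ k ih =>
    rw [Function.iterate_succ_apply']
    exact chld_nonroot p hfork ih

lemma iter_p_chld {v : V} (hv : p v ≠ v) {j k : ℕ} (hjk : j ≤ k) :
    p^[j] ((chld p hfork)^[k] v) = (chld p hfork)^[k - j] v := by
  induction j with
  | zero => simp
  | succ j ih =>
    have hjk' : j ≤ k := Nat.le_of_succ_le hjk
    have h1 : k - j = (k - (j + 1)) + 1 := by omega
    rw [Function.iterate_succ_apply', ih hjk', h1, Function.iterate_succ_apply']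
    exact chld_parent p hfork (chld_iter_nonroot p hfork hv _)

lemma eq_chld_iter : ∀ (k : ℕ) (x : V), (∀ j, j ≤ k → p (p^[j] x) ≠ p^[j] x) →
    x = (chld p hfork)^[k] (p^[k] x) := by
  intro k
  induction k with
  | zero => intro x _; simp
  | succ k ih =>
    intro x hx
    have h1 : x = (chld p hfork)^[k] (p^[k] x) := ih x (fun j hj => hx j (Nat.le_succ_of_le hj))
    have h2 : p^[k] x = chld p hfork (p^[k+1] x) := by
      refine eq_chld p hfork (hx (k+1) le_rfl) ?_
      rw [← Function.iterate_succ_apply' p]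
    rw [Function.iterate_succ_apply (chld p hfork), ← h2, ← h1]

lemma iterWeight_eq_prod (n : ℕ) (v : V) :
    iterWeight p lam n v = ∏ j ∈ Finset.range n, lam (p^[j] v) := by
  induction n generalizing v with
  | zero => simp [iterWeight]
  | succ n ih =>
    rw [iterWeight, ih, Finset.prod_range_succ']
    simp [Function.iterate_succ_apply]

lemma nnnorm_sq_iterWeight (n : ℕ) (v : V) :
    (‖iterWeight p lam n v‖₊ : ℝ≥0∞) ^ 2
      = ∏ j ∈ Finset.range n, (‖lam (p^[j] v)‖₊ : ℝ≥0∞) ^ 2 := by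
  rw [iterWeight_eq_prod]
  induction n with
  | zero => simp
  | succ n ih =>
    rw [Finset.prod_range_succ, Finset.prod_range_succ, ← ih]
    push_cast [nnnorm_mul]
    ring

variable (S : Hs V →L[ℂ] Hs V)

lemma pow_apply (hS : IsWeightedShift p lam S) (n : ℕ) (f : Hs V) (v : V) :
    ((S ^ n) f : ∀ _ : V, ℂ) v = iterWeight p lam n v * (f : ∀ _ : V, ℂ) (p^[n] v) := by
  induction n generalizing f v with
  | zero => simp [iterWeight]
  | succ n ih =>
    have h : (S ^ (n + 1)) f = S ((S ^ n) f) := by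
      rw [pow_succ']; rfl
    rw [h, hS ((S ^ n) f) v, ih]
    rw [iterWeight, Function.iterate_succ_apply]
    ring

lemma enorm_sq_eq (f : Hs V) :
    (‖f‖₊ : ℝ≥0∞) ^ 2 = ∑' v, (‖(f : ∀ _ : V, ℂ) v‖₊ : ℝ≥0∞) ^ 2 := by
  have hp : 0 < (2 : ℝ≥0∞).toReal := by norm_num
  have h := lp.norm_rpow_eq_tsum hp f
  have hs : Summable fun v => ‖(f : ∀ _ : V, ℂ) v‖ ^ (2 : ℝ≥0∞).toReal :=
    (lp.memℓp f).summable hp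
  have h2 : (2 : ℝ≥0∞).toReal = (2 : ℝ) := by norm_num
  calc (‖f‖₊ : ℝ≥0∞) ^ 2 = ENNReal.ofReal (‖f‖ ^ (2 : ℝ≥0∞).toReal) := by
        rw [h2, show (2:ℝ) = ((2:ℕ):ℝ) by norm_num, Real.rpow_natCast,
          ENNReal.ofReal_pow (norm_nonneg _), ofReal_norm_eq_coe_nnnorm]
    _ = ENNReal.ofReal (∑' v, ‖(f : ∀ _ : V, ℂ) v‖ ^ (2 : ℝ≥0∞).toReal) := by rw [h]
    _ = ∑' v, ENNReal.ofReal (‖(f : ∀ _ : V, ℂ) v‖ ^ (2 : ℝ≥0∞).toReal) :=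
        ENNReal.ofReal_tsum_of_nonneg (fun v => by positivity) hs
    _ = ∑' v, (‖(f : ∀ _ : V, ℂ) v‖₊ : ℝ≥0∞) ^ 2 := by
        refine tsum_congr fun v => ?_
        rw [h2, show (2:ℝ) = ((2:ℕ):ℝ) by norm_num, Real.rpow_natCast,
          ENNReal.ofReal_pow (norm_nonneg _), ofReal_norm_eq_coe_nnnorm]

lemma ennreal_cs {ι : Type u} (a b : ι → ℝ≥0∞) :
    ∑' i, a i * b i ≤ (∑' i, a i ^ 2) ^ (1/2 : ℝ) * (∑' i, b i ^ 2) ^ (1/2 : ℝ) := by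
  letI : MeasurableSpace ι := ⊤
  haveI : MeasurableSingletonClass ι := ⟨fun _ => trivial⟩
  have hpq : (2 : ℝ).HolderConjugate 2 := Real.HolderConjugate.two_two
  have ha : AEMeasurable a (MeasureTheory.Measure.count) :=
    Measurable.aemeasurable (fun s _ => trivial)
  have hb : AEMeasurable b (MeasureTheory.Measure.count) :=
    Measurable.aemeasurable (fun s _ => trivial)
  have h := ENNReal.lintegral_mul_le_Lp_mul_Lq (MeasureTheory.Measure.count (α := ι))
      hpq ha hb
  rw [MeasureTheory.lintegral_count] at h
  simp only [Pi.mul_apply] at h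
  refine le_trans h ?_
  rw [MeasureTheory.lintegral_count, MeasureTheory.lintegral_count]
  apply le_of_eq
  have e1 : ∀ c : ι → ℝ≥0∞, ∑' i, c i ^ (2:ℝ) = ∑' i, c i ^ (2:ℕ) := by
    intro c
    refine tsum_congr fun i => ?_
    rw [show ((2:ℝ)) = ((2:ℕ):ℝ) by norm_num, ENNReal.rpow_natCast]
  rw [e1 a, e1 b]

lemma nnnorm_tsum_le' {ι : Type u} (h : ι → ℂ) :
    (‖∑' i, h i‖₊ : ℝ≥0∞) ≤ ∑' i, (‖h i‖₊ : ℝ≥0∞) := by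
  by_cases hs : Summable fun i => ‖h i‖₊
  · rw [← ENNReal.coe_tsum hs]
    exact_mod_cast nnnorm_tsum_le hs
  · have : ∑' i, (‖h i‖₊ : ℝ≥0∞) = ⊤ := by
      by_contra hne
      exact hs (ENNReal.tsum_coe_ne_top_iff_summable.1 hne)
    simp [this]

lemma tsum_fiber {W : Type u} (π : W → W) (F : W → ℝ≥0∞) :
    ∑' u, ∑' w : {v : W // π v = u}, F ↑w = ∑' v, F v := by
  calc ∑' u, ∑' w : {v : W // π v = u}, F ↑w
      = ∑' x : Σ u : W, {v : W // π v = u}, F ↑x.2 :=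
        (ENNReal.tsum_sigma fun u (w : {v : W // π v = u}) => F ↑w).symm
    _ = ∑' v, F v := (Equiv.sigmaFiberEquiv π).tsum_eq F

lemma aux_inj_le {α β : Type u} (F : α → ℝ≥0∞) (G : β → ℝ≥0∞) (σ : α → β)
    (hinj : ∀ a b, F a ≠ 0 → F b ≠ 0 → σ a = σ b → a = b)
    (hle : ∀ a, F a ≤ G (σ a)) : ∑' a, F a ≤ ∑' b, G b := by
  rw [← tsum_subtype_support F]
  calc ∑' x : Function.support F, F ↑x ≤ ∑' x : Function.support F, G (σ ↑x) :=
        ENNReal.tsum_le_tsum fun x => hle ↑x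
    _ ≤ ∑' b, G b := by
        refine ENNReal.tsum_comp_le_tsum_of_injective ?_ G
        rintro ⟨x, hx⟩ ⟨y, hy⟩ hxy
        exact Subtype.ext (hinj x y hx hy hxy)

lemma hyponormal_iff_norm {E : Type u} [NormedAddCommGroup E] [InnerProductSpace ℂ E]
    [CompleteSpace E] (A : E →L[ℂ] E) :
    Hyponormal A ↔ ∀ f, ‖ContinuousLinearMap.adjoint A f‖ ≤ ‖A f‖ := by
  have key : ∀ f : E,
      (ContinuousLinearMap.adjoint A ∘L A - A ∘L ContinuousLinearMap.adjoint A).reApplyInnerSelf f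
        = ‖A f‖ ^ 2 - ‖ContinuousLinearMap.adjoint A f‖ ^ 2 := by
    intro f
    rw [ContinuousLinearMap.reApplyInnerSelf]
    rw [ContinuousLinearMap.sub_apply, inner_sub_left, map_sub]
    rw [ContinuousLinearMap.comp_apply, ContinuousLinearMap.comp_apply]
    rw [ContinuousLinearMap.adjoint_inner_left A f (A f),
      ← ContinuousLinearMap.adjoint_inner_right A (ContinuousLinearMap.adjoint A f) f]
    rw [inner_self_eq_norm_sq, inner_self_eq_norm_sq]
  constructor
  · intro hA f
    have h := hA.2 f
    rw [key f] at h
    have h2 : ‖ContinuousLinearMap.adjoint A f‖ ^ 2 ≤ ‖A f‖ ^ 2 := by linarith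
    exact (pow_le_pow_iff_left₀ (norm_nonneg _) (norm_nonneg _) two_ne_zero).1 h2
  · intro h
    constructor
    · have e : ContinuousLinearMap.adjoint A ∘L A - A ∘L ContinuousLinearMap.adjoint A
          = star A * A - A * star A := by
        rw [ContinuousLinearMap.star_eq_adjoint]; rfl
      rw [e]
      exact ContinuousLinearMap.isSelfAdjoint_iff_isSymmetric.1 ((IsSelfAdjoint.star_mul_self A).sub (IsSelfAdjoint.mul_star_self A))
    · intro f
      rw [key f, sub_nonneg]
      exact pow_le_pow_left₀ (norm_nonneg _) (h f) 2

variable (hw : WeightSystem p lam)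

lemma op_enorm_sq (hS : IsWeightedShift p lam S) (n : ℕ) (f : Hs V) :
    (‖(S ^ n) f‖₊ : ℝ≥0∞) ^ 2
      = ∑' v, (‖iterWeight p lam n v‖₊ : ℝ≥0∞) ^ 2
          * (‖(f : ∀ _ : V, ℂ) (p^[n] v)‖₊ : ℝ≥0∞) ^ 2 := by
  rw [enorm_sq_eq]
  refine tsum_congr fun v => ?_
  rw [pow_apply p lam S hS n f v, nnnorm_mul]
  push_cast
  ring

lemma inner_pow (hS : IsWeightedShift p lam S) (n : ℕ) (f g : Hs V) :
    ⟪f, (S ^ n) g⟫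
      = ∑' v, (starRingEnd ℂ) ((f : ∀ _ : V, ℂ) v)
          * (iterWeight p lam n v * (g : ∀ _ : V, ℂ) (p^[n] v)) := by
  rw [lp.inner_eq_tsum]
  refine tsum_congr fun v => ?_
  rw [RCLike.inner_apply, pow_apply p lam S hS n g v]
  ring

lemma ev_apply (v x : V) : (ev v : ∀ _ : V, ℂ) x = if x = v then 1 else 0 := by
  simp [ev, lp.single_apply, Pi.single_apply]

lemma norm_ev (v : V) : ‖(ev v : Hs V)‖ = 1 := by
  have h : ‖lp.single (E := fun _ : V => ℂ) 2 v ((fun _ => (1:ℂ)) v)‖ = ‖((fun _ => (1:ℂ)) v)‖ :=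
    lp.norm_single (E := fun _ : V => ℂ) (by norm_num : (0:ℝ≥0∞) < 2) v ((fun _ : V => (1:ℂ)) v)
  simpa [ev] using h

lemma enorm_S_ev (hS : IsWeightedShift p lam S) {v : V} (hv : p v ≠ v) :
    (‖S (ev v)‖₊ : ℝ≥0∞) ^ 2 = (‖lam (chld p hfork v)‖₊ : ℝ≥0∞) ^ 2 := by
  have h := op_enorm_sq p lam S hS 1 (ev v)
  rw [pow_one] at h
  rw [h]
  refine tsum_eq_single (chld p hfork v) ?_ |>.trans ?_
  · intro x hx
    have : (ev v : ∀ _ : V, ℂ) (p^[1] x) = 0 := by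
      rw [Function.iterate_one, ev_apply]
      rw [if_neg]
      intro hpx
      exact hx (eq_chld p hfork hv hpx)
    rw [this]
    simp
  · rw [Function.iterate_one, chld_parent p hfork hv, ev_apply, if_pos rfl]
    simp [iterWeight]

lemma lam_mono (hS : IsWeightedShift p lam S)
    (hypo : ∀ f, ‖ContinuousLinearMap.adjoint S f‖ ≤ ‖S f‖) {v : V} (hv : p v ≠ v) :
    (‖lam v‖₊ : ℝ≥0∞) ^ 2 ≤ (‖lam (chld p hfork v)‖₊ : ℝ≥0∞) ^ 2 := by
  have h1 : ⟪(ev v : Hs V), S (ev (p v))⟫ = lam v := by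
    have : ⟪(ev v : Hs V), S (ev (p v))⟫ = (S (ev (p v)) : ∀ _ : V, ℂ) v := by
      simp [ev, lp.inner_single_left]
    rw [this, hS (ev (p v)) v, ev_apply, if_pos rfl, mul_one]
  have h2 : ‖lam v‖ ≤ ‖S (ev v)‖ := by
    calc ‖lam v‖ = ‖⟪(ev v : Hs V), S (ev (p v))⟫‖ := by rw [h1]
      _ = ‖⟪ContinuousLinearMap.adjoint S (ev v), ev (p v)⟫‖ := by
          rw [ContinuousLinearMap.adjoint_inner_left]
      _ ≤ ‖ContinuousLinearMap.adjoint S (ev v)‖ * ‖(ev (p v) : Hs V)‖ :=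
          norm_inner_le_norm _ _
      _ ≤ ‖S (ev v)‖ * 1 := by
          rw [norm_ev]
          exact mul_le_mul_of_nonneg_right (hypo _) zero_le_one
      _ = ‖S (ev v)‖ := mul_one _
  calc (‖lam v‖₊ : ℝ≥0∞) ^ 2 ≤ (‖S (ev v)‖₊ : ℝ≥0∞) ^ 2 := by
        gcongr
        exact_mod_cast h2
    _ = (‖lam (chld p hfork v)‖₊ : ℝ≥0∞) ^ 2 := enorm_S_ev p lam hfork S hS hv

/-- the one-step ratio `|λ_w|² / |λ_{child w}|²` for `w` a child of `u` with nonzero weight -/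
def rstep (hfork : Forkless p) (u w : V) : ℝ≥0∞ :=
  if p w = u ∧ w ≠ u ∧ lam w ≠ 0 then
    (‖lam w‖₊ : ℝ≥0∞) ^ 2 / (‖lam (chld p hfork w)‖₊ : ℝ≥0∞) ^ 2
  else 0

lemma criterion (hS : IsWeightedShift p lam S)
    (hypo : ∀ f, ‖ContinuousLinearMap.adjoint S f‖ ≤ ‖S f‖) (u : V) :
    ∑' w, rstep p lam hfork u w ≤ 1 := by
  rw [ENNReal.tsum_eq_iSup_sum]
  refine iSup_le fun s => ?_
  classical
  set P : V → Prop := fun w => p w = u ∧ w ≠ u ∧ lam w ≠ 0 with hP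
  set s' : Finset V := s.filter P with hs'
  -- facts about members of s'
  have hmem : ∀ w ∈ s', p w = u ∧ w ≠ u ∧ lam w ≠ 0 := by
    intro w hw'
    exact (Finset.mem_filter.1 hw').2
  have hnr : ∀ w ∈ s', p w ≠ w := by
    intro w hw'
    obtain ⟨h1, h2, _⟩ := hmem w hw'
    rw [h1]; exact fun h => h2 h.symm
  have hapos : ∀ w ∈ s', 0 < ‖lam (chld p hfork w)‖ := by
    intro w hw'
    obtain ⟨_, _, h3⟩ := hmem w hw'
    have := lam_mono p lam hfork S hS hypo (hnr w hw')
    have h4 : (0:ℝ≥0∞) < (‖lam w‖₊ : ℝ≥0∞) ^ 2 := by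
      have : ‖lam w‖₊ ≠ 0 := by simpa using h3
      positivity
    have h5 : (0:ℝ≥0∞) < (‖lam (chld p hfork w)‖₊ : ℝ≥0∞) ^ 2 := lt_of_lt_of_le h4 this
    have : ‖lam (chld p hfork w)‖₊ ≠ 0 := by
      intro h0; rw [h0] at h5; simp at h5
    simpa [pos_iff_ne_zero] using this
  -- reduce to sum over s'
  have hsum : ∑ w ∈ s, rstep p lam hfork u w
      = ∑ w ∈ s', (‖lam w‖₊ : ℝ≥0∞) ^ 2 / (‖lam (chld p hfork w)‖₊ : ℝ≥0∞) ^ 2 := by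
    rw [hs', Finset.sum_filter]
    refine Finset.sum_congr rfl fun w _ => ?_
    by_cases hc : P w
    · rw [if_pos hc, rstep, if_pos hc]
    · rw [if_neg hc, rstep, if_neg hc]
  rw [hsum]
  -- the test vector
  set cc : V → ℂ := fun w => (((‖lam (chld p hfork w)‖ ^ 2 : ℝ) : ℂ))⁻¹ * lam w with hcc
  set f : Hs V := ∑ w ∈ s', cc w • ev w with hf
  have hfc : ∀ x : V, (f : ∀ _ : V, ℂ) x = if x ∈ s' then cc x else 0 := by
    intro x
    rw [hf]
    rw [lp.coeFn_sum, Finset.sum_apply]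
    have : ∀ w ∈ s', (cc w • ev w : Hs V) x = if w = x then cc w else 0 := by
      intro w _
      rw [lp.coeFn_smul, Pi.smul_apply, ev_apply]
      by_cases hxw : x = w
      · rw [if_pos hxw, if_pos hxw.symm]; simp
      · rw [if_neg hxw, if_neg (fun h => hxw h.symm)]; simp
    rw [Finset.sum_congr rfl this, Finset.sum_ite_eq' s' x cc]
  -- real quantities
  set t : ℝ := ∑ w ∈ s', ‖lam w‖ ^ 2 / ‖lam (chld p hfork w)‖ ^ 2 with ht
  have htnn : 0 ≤ t := Finset.sum_nonneg fun w _ => by positivity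
  -- (i) the inner product
  have hinner : ⟪f, S (ev u)⟫ = (t : ℂ) := by
    have h1 : ⟪f, S (ev u)⟫ = ∑' x, (starRingEnd ℂ) ((f : ∀ _ : V, ℂ) x)
        * (lam x * (ev u : ∀ _ : V, ℂ) (p x)) := by
      rw [lp.inner_eq_tsum]
      refine tsum_congr fun x => ?_
      rw [RCLike.inner_apply, hS (ev u) x]
      ring
    rw [h1]
    rw [tsum_eq_sum (s := s') (fun x hx => by rw [hfc x, if_neg hx]; simp)]
    rw [Complex.ofReal_sum]
    refine Finset.sum_congr rfl fun w hw' => ?_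
    obtain ⟨h1', h2', h3'⟩ := hmem w hw'
    rw [hfc w, if_pos hw', h1', ev_apply, if_pos rfl, mul_one, hcc]
    rw [map_mul, map_inv₀, Complex.conj_ofReal, mul_assoc, RCLike.conj_mul]
    push_cast
    ring_nf
    with_unfolding_all rfl
  -- (ii) norm of S f
  have hSf : (‖S f‖₊ : ℝ≥0∞) ^ 2 = ENNReal.ofReal t := by
    have h := op_enorm_sq p lam S hS 1 f
    rw [pow_one] at h
    rw [h]
    set s'' : Finset V := s'.image (chld p hfork) with hs''
    rw [tsum_eq_sum (s := s'') ?_]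
    · rw [Finset.sum_image ?_]
      · rw [ht, ENNReal.ofReal_sum_of_nonneg (fun w _ => by positivity)]
        refine Finset.sum_congr rfl fun w hw' => ?_
        have hnrw := hnr w hw'
        have hpw : p (chld p hfork w) = w := chld_parent p hfork hnrw
        rw [Function.iterate_one, hpw, hfc w, if_pos hw', hcc]
        rw [show iterWeight p lam 1 (chld p hfork w) = lam (chld p hfork w) from by
          simp [iterWeight]]
        have hap := hapos w hw'
        have hane : ‖lam (chld p hfork w)‖ ≠ 0 := hap.ne'
        have hn1 : ‖cc w‖ = (‖lam (chld p hfork w)‖ ^ 2)⁻¹ * ‖lam w‖ := by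
          rw [hcc, norm_mul, norm_inv, Complex.norm_real, Real.norm_eq_abs,
            abs_of_nonneg (by positivity)]
        rw [← ofReal_norm_eq_coe_nnnorm, ← ofReal_norm_eq_coe_nnnorm,
          ← ENNReal.ofReal_pow (norm_nonneg _), ← ENNReal.ofReal_pow (norm_nonneg _),
          ← ENNReal.ofReal_mul (by positivity), hn1]
        congr 1
        have habs : ‖lam (chld p hfork w)‖ ≠ 0 := by
          exact hane
        field_simp
      · intro w1 hw1 w2 hw2 heq
        have e1 : p (chld p hfork w1) = w1 := chld_parent p hfork (hnr w1 hw1)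
        have e2 : p (chld p hfork w2) = w2 := chld_parent p hfork (hnr w2 hw2)
        rw [← e1, ← e2, heq]
    · intro x hx
      by_cases hfz : (f : ∀ _ : V, ℂ) (p^[1] x) = 0
      · rw [hfz]; simp
      · exfalso
        rw [Function.iterate_one] at hfz
        rw [hfc (p x)] at hfz
        have hpx : p x ∈ s' := by
          by_contra hc; rw [if_neg hc] at hfz; exact hfz rfl
        have : x = chld p hfork (p x) := eq_chld p hfork (hnr (p x) hpx) rfl
        exact hx (by rw [hs'']; exact Finset.mem_image.2 ⟨p x, hpx, this.symm⟩)
  -- (iii) t ≤ ‖S f‖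
  have hts : t ≤ ‖S f‖ := by
    calc t = ‖(t : ℂ)‖ := by rw [Complex.norm_real, Real.norm_eq_abs, abs_of_nonneg htnn]
      _ = ‖⟪f, S (ev u)⟫‖ := by rw [hinner]
      _ = ‖⟪ContinuousLinearMap.adjoint S f, ev u⟫‖ := by
          rw [ContinuousLinearMap.adjoint_inner_left]
      _ ≤ ‖ContinuousLinearMap.adjoint S f‖ * ‖(ev u : Hs V)‖ := norm_inner_le_norm _ _
      _ ≤ ‖S f‖ * 1 := by
          rw [norm_ev]
          exact mul_le_mul_of_nonneg_right (hypo _) zero_le_one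
      _ = ‖S f‖ := mul_one _
  -- (iv) ‖S f‖ ^ 2 = t
  have hSf2 : ‖S f‖ ^ 2 = t := by
    have : ENNReal.ofReal (‖S f‖ ^ 2) = ENNReal.ofReal t := by
      rw [← hSf, ENNReal.ofReal_pow (norm_nonneg _), ofReal_norm_eq_coe_nnnorm]
    exact (ENNReal.ofReal_eq_ofReal_iff (by positivity) htnn).1 this
  have ht1 : t ≤ 1 := by nlinarith
  -- conclude
  calc ∑ w ∈ s', (‖lam w‖₊ : ℝ≥0∞) ^ 2 / (‖lam (chld p hfork w)‖₊ : ℝ≥0∞) ^ 2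
      = ENNReal.ofReal t := by
        rw [ht, ENNReal.ofReal_sum_of_nonneg (fun w _ => by positivity)]
        refine Finset.sum_congr rfl fun w hw' => ?_
        rw [ENNReal.ofReal_div_of_pos (by have := hapos w hw'; positivity)]
        rw [ENNReal.ofReal_pow (norm_nonneg _), ENNReal.ofReal_pow (norm_nonneg _),
          ofReal_norm_eq_coe_nnnorm, ofReal_norm_eq_coe_nnnorm]
    _ ≤ 1 := by
        rw [show (1:ℝ≥0∞) = ENNReal.ofReal 1 by simp]
        exact ENNReal.ofReal_le_ofReal ht1

/-- `C_v = Σ_{p^[n] w = v} |λ^(n)_w|²` -/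
def Cfun (n : ℕ) (v : V) : ℝ≥0∞ :=
  ∑' w : {w : V // p^[n] w = v}, (‖iterWeight p lam n ↑w‖₊ : ℝ≥0∞) ^ 2

/-- the ratio `|λ^(n)_v|² / C_v` (or 0 when the weight vanishes) -/
def Rfun (n : ℕ) (v : V) : ℝ≥0∞ :=
  if iterWeight p lam n v = 0 then 0
  else (‖iterWeight p lam n v‖₊ : ℝ≥0∞) ^ 2 / Cfun p lam n v

lemma Cfun_eq (hS : IsWeightedShift p lam S) (n : ℕ) (v : V) :
    Cfun p lam n v = (‖(S ^ n) (ev v)‖₊ : ℝ≥0∞) ^ 2 := by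
  rw [op_enorm_sq p lam S hS n (ev v)]
  have h0 : Cfun p lam n v
      = ∑' w : {w : V | p^[n] w = v}, (‖iterWeight p lam n ↑w‖₊ : ℝ≥0∞) ^ 2 := rfl
  rw [h0, tsum_subtype {w : V | p^[n] w = v} (fun w => (‖iterWeight p lam n w‖₊ : ℝ≥0∞) ^ 2)]
  refine tsum_congr fun x => ?_
  by_cases hx : p^[n] x = v
  · have hx' : x ∈ {w : V | p^[n] w = v} := hx
    rw [Set.indicator_of_mem hx', hx, ev_apply, if_pos rfl]
    simp
  · have hx' : x ∉ {w : V | p^[n] w = v} := hx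
    rw [Set.indicator_of_notMem hx', ev_apply, if_neg hx]
    simp

lemma Cfun_ne_top (hS : IsWeightedShift p lam S) (n : ℕ) (v : V) :
    Cfun p lam n v ≠ ⊤ := by
  rw [Cfun_eq p lam S hS n v]
  exact ENNReal.pow_ne_top ENNReal.coe_ne_top

include hfork

lemma lam_chld_iter_ne (hS : IsWeightedShift p lam S)
    (hypo : ∀ f, ‖ContinuousLinearMap.adjoint S f‖ ≤ ‖S f‖) {v : V} (hv : p v ≠ v)
    (hl : lam v ≠ 0) (k : ℕ) : lam ((chld p hfork)^[k] v) ≠ 0 := by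
  induction k with
  | zero => exact hl
  | succ k ih =>
    have hnr := chld_iter_nonroot p hfork hv k
    have hm := lam_mono p lam hfork S hS hypo hnr
    rw [Function.iterate_succ_apply']
    intro h0
    rw [h0] at hm
    simp only [nnnorm_zero, ENNReal.coe_zero, ne_eq, zero_pow, OfNat.ofNat_ne_zero,
      not_false_eq_true, le_zero_iff, pow_eq_zero_iff, ENNReal.coe_eq_zero,
      nnnorm_eq_zero] at hm
    exact ih hm

omit hfork in
lemma iter_fac {n : ℕ} {v : V} (hΛ : iterWeight p lam n v ≠ 0) :
    ∀ j < n, lam (p^[j] v) ≠ 0 := by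
  intro j hj hzero
  apply hΛ
  rw [iterWeight_eq_prod]
  exact Finset.prod_eq_zero (Finset.mem_range.2 hj) hzero

lemma v_eq_chld_iter (hw : WeightSystem p lam) {n : ℕ} (hn : 1 ≤ n) {v : V}
    (hΛ : iterWeight p lam n v ≠ 0) :
    v = (chld p hfork)^[n-1] (p^[n-1] v) := by
  refine eq_chld_iter p hfork (n-1) v fun j hj => ?_
  have hl : lam (p^[j] v) ≠ 0 := iter_fac p lam hΛ j (by omega)
  intro hroot
  exact hl (hw _ hroot)

lemma Cfun_ne_zero (hS : IsWeightedShift p lam S)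
    (hypo : ∀ f, ‖ContinuousLinearMap.adjoint S f‖ ≤ ‖S f‖) (hw : WeightSystem p lam)
    {n : ℕ} {v : V} (hΛ : iterWeight p lam n v ≠ 0) :
    Cfun p lam n v ≠ 0 := by
  have hmain : ∃ x₀ : {w : V // p^[n] w = v}, iterWeight p lam n ↑x₀ ≠ 0 := by
    rcases Nat.eq_zero_or_pos n with rfl | hn
    · exact ⟨⟨v, rfl⟩, hΛ⟩
    · have hlv : lam v ≠ 0 := by simpa using iter_fac p lam hΛ 0 hn
      have hv : p v ≠ v := fun hr => hlv (hw v hr)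
      have hpx₀ : p^[n] ((chld p hfork)^[n] v) = v := by
        simpa using iter_p_chld p hfork hv (le_refl n)
      refine ⟨⟨(chld p hfork)^[n] v, hpx₀⟩, ?_⟩
      rw [iterWeight_eq_prod, Finset.prod_ne_zero_iff]
      intro j hj
      rw [Finset.mem_range] at hj
      rw [iter_p_chld p hfork hv (le_of_lt hj)]
      exact lam_chld_iter_ne p lam hfork S hS hypo hv hlv (n - j)
  obtain ⟨x₀, hx₀⟩ := hmain
  intro h0
  have hle := ENNReal.le_tsum (f := fun w : {w : V // p^[n] w = v} =>
    (‖iterWeight p lam n ↑w‖₊ : ℝ≥0∞) ^ 2) x₀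
  rw [show (∑' w : {w : V // p^[n] w = v}, (‖iterWeight p lam n ↑w‖₊ : ℝ≥0∞) ^ 2)
    = Cfun p lam n v from rfl, h0] at hle
  rw [le_zero_iff, pow_eq_zero_iff (by norm_num : (2:ℕ) ≠ 0), ENNReal.coe_eq_zero,
    nnnorm_eq_zero] at hle
  exact hx₀ hle

set_option maxHeartbeats 1000000 in
lemma Rfun_le (hS : IsWeightedShift p lam S)
    (hypo : ∀ f, ‖ContinuousLinearMap.adjoint S f‖ ≤ ‖S f‖) (hw : WeightSystem p lam)
    {n : ℕ} (hn : 1 ≤ n) (v : V) :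
    Rfun p lam n v ≤ rstep p lam hfork (p^[n] v) (p^[n-1] v) := by
  by_cases hΛ : iterWeight p lam n v = 0
  · rw [Rfun, if_pos hΛ]
    exact zero_le
  rw [Rfun, if_neg hΛ]
  set w := p^[n-1] v with hwdef
  have hfac : ∀ j < n, lam (p^[j] v) ≠ 0 := iter_fac p lam hΛ
  have hnrj : ∀ j, j ≤ n - 1 → p (p^[j] v) ≠ p^[j] v := by
    intro j hj hroot
    exact hfac j (by omega) (hw _ hroot)
  have hlw : lam w ≠ 0 := hfac (n-1) (by omega)
  have hwnr : p w ≠ w := hnrj (n-1) le_rfl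
  have hpwu : p w = p^[n] v := by
    rw [hwdef, ← Function.iterate_succ_apply' p (n-1) v]
    congr 1
    omega
  have hwne : w ≠ p^[n] v := by
    rw [← hpwu]; exact fun h => hwnr h.symm
  have hrs : rstep p lam hfork (p^[n] v) w
      = (‖lam w‖₊ : ℝ≥0∞) ^ 2 / (‖lam (chld p hfork w)‖₊ : ℝ≥0∞) ^ 2 := by
    rw [rstep, if_pos ⟨hpwu, hwne, hlw⟩]
  rw [hrs]
  -- the chain
  set b : ℕ → ℝ≥0∞ := fun k => (‖lam ((chld p hfork)^[k] w)‖₊ : ℝ≥0∞) ^ 2 with hb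
  have hbmono : Monotone b := by
    refine monotone_nat_of_le_succ fun k => ?_
    have hnr := chld_iter_nonroot p hfork hwnr k
    have hm := lam_mono p lam hfork S hS hypo hnr
    rw [hb]
    simp only
    rw [Function.iterate_succ_apply']
    exact hm
  have hb0 : b 0 ≠ 0 := by
    rw [hb]; simpa using hlw
  have hbne : ∀ k, b k ≠ 0 := fun k h0 =>
    hb0 (le_antisymm (h0 ▸ hbmono (Nat.zero_le k)) zero_le)
  have hbtop : ∀ k, b k ≠ ⊤ := fun k => ENNReal.pow_ne_top ENNReal.coe_ne_top
  have hvchld : v = (chld p hfork)^[n-1] w := v_eq_chld_iter p lam hfork hw hn hΛ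
  -- |Λ v|² as a product
  have hΛv : (‖iterWeight p lam n v‖₊ : ℝ≥0∞) ^ 2 = ∏ k ∈ Finset.range n, b k := by
    rw [nnnorm_sq_iterWeight, ← Finset.prod_range_reflect b n]
    refine Finset.prod_congr rfl fun j hj => ?_
    rw [Finset.mem_range] at hj
    conv_lhs => rw [hvchld]
    rw [iter_p_chld p hfork hwnr (by omega : j ≤ n - 1)]
  -- lower bound for C
  have hvnr : p v ≠ v := hnrj 0 (Nat.zero_le _)
  have hpx₀ : p^[n] ((chld p hfork)^[n] v) = v := by
    simpa using iter_p_chld p hfork hvnr (le_refl n)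
  have hΛx₀ : (‖iterWeight p lam n ((chld p hfork)^[n] v)‖₊ : ℝ≥0∞) ^ 2
      = ∏ k ∈ Finset.range n, b (n + k) := by
    rw [nnnorm_sq_iterWeight, ← Finset.prod_range_reflect (fun k => b (n + k)) n]
    refine Finset.prod_congr rfl fun j hj => ?_
    rw [Finset.mem_range] at hj
    rw [iter_p_chld p hfork hvnr (le_of_lt hj)]
    conv_lhs => rw [hvchld, ← Function.iterate_add_apply]
    have hidx : (n - j) + (n - 1) = n + (n - 1 - j) := by omega
    rw [hidx]
  have hCge : ∏ k ∈ Finset.range n, b (n + k) ≤ Cfun p lam n v := by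
    rw [← hΛx₀]
    exact le_trans (ENNReal.le_tsum (f := fun w : {w : V // p^[n] w = v} =>
      (‖iterWeight p lam n ↑w‖₊ : ℝ≥0∞) ^ 2) ⟨(chld p hfork)^[n] v, hpx₀⟩) le_rfl
  -- product inequality
  have hprod : ∏ k ∈ Finset.range n, b k
      ≤ (b 0 / b 1) * ∏ k ∈ Finset.range n, b (n + k) := by
    obtain ⟨m', hm'⟩ : ∃ m', n = m' + 1 := ⟨n - 1, by omega⟩
    subst hm'
    rw [Finset.prod_range_succ' b m', Finset.prod_range_succ' (fun k => b (m' + 1 + k)) m']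
    have h1 : ∏ k ∈ Finset.range m', b (k + 1)
        ≤ ∏ k ∈ Finset.range m', b (m' + 1 + (k + 1)) :=
      Finset.prod_le_prod' fun k _ => hbmono (by omega)
    have h2 : b 0 ≤ (b 0 / b 1) * b (m' + 1 + 0) := by
      calc b 0 = (b 0 / b 1) * b 1 := (ENNReal.div_mul_cancel (hbne 1) (hbtop 1)).symm
        _ ≤ (b 0 / b 1) * b (m' + 1 + 0) := mul_le_mul_right (hbmono (by omega)) _
    calc (∏ k ∈ Finset.range m', b (k + 1)) * b 0
        ≤ (∏ k ∈ Finset.range m', b (m' + 1 + (k + 1))) * ((b 0 / b 1) * b (m' + 1 + 0)) :=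
          mul_le_mul' h1 h2
      _ = (b 0 / b 1) * ((∏ k ∈ Finset.range m', b (m' + 1 + (k + 1))) * b (m' + 1 + 0)) := by
          ring
  -- conclude
  have hden_ne : (∏ k ∈ Finset.range n, b (n + k)) ≠ 0 :=
    Finset.prod_ne_zero_iff.2 fun k _ => hbne _
  have hden_top : (∏ k ∈ Finset.range n, b (n + k)) ≠ ⊤ :=
    (ENNReal.prod_lt_top fun k _ => lt_top_iff_ne_top.2 (hbtop _)).ne
  have hb01 : (‖lam w‖₊ : ℝ≥0∞) ^ 2 / (‖lam (chld p hfork w)‖₊ : ℝ≥0∞) ^ 2 = b 0 / b 1 := by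
    rw [hb]
    norm_num
  rw [hb01]
  calc (‖iterWeight p lam n v‖₊ : ℝ≥0∞) ^ 2 / Cfun p lam n v
      ≤ (‖iterWeight p lam n v‖₊ : ℝ≥0∞) ^ 2 / ∏ k ∈ Finset.range n, b (n + k) :=
        ENNReal.div_le_div_left hCge _
    _ ≤ b 0 / b 1 := by
        rw [ENNReal.div_le_iff hden_ne hden_top, hΛv]
        exact hprod

lemma key_fiber (hS : IsWeightedShift p lam S)
    (hypo : ∀ f, ‖ContinuousLinearMap.adjoint S f‖ ≤ ‖S f‖) (hw : WeightSystem p lam)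
    {n : ℕ} (hn : 1 ≤ n) (u : V) :
    ∑' v : {v : V // p^[n] v = u}, Rfun p lam n ↑v ≤ 1 := by
  refine le_trans (aux_inj_le (fun v : {v : V // p^[n] v = u} => Rfun p lam n ↑v)
    (rstep p lam hfork u) (fun v => p^[n-1] ↑v) ?_ ?_) (criterion p lam hfork S hS hypo u)
  · rintro ⟨a, ha⟩ ⟨c, hc⟩ hFa hFc heq
    have hΛa : iterWeight p lam n a ≠ 0 := by
      intro h0
      apply hFa
      simp only [Rfun, if_pos h0]
    have hΛc : iterWeight p lam n c ≠ 0 := by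
      intro h0
      apply hFc
      simp only [Rfun, if_pos h0]
    have ha' := v_eq_chld_iter p lam hfork hw hn hΛa
    have hc' := v_eq_chld_iter p lam hfork hw hn hΛc
    refine Subtype.ext ?_
    simp only at heq ⊢
    rw [ha', hc', heq]
  · rintro ⟨a, ha⟩
    have h := Rfun_le p lam hfork S hS hypo hw hn a
    simpa [ha] using h

set_option maxHeartbeats 1000000 in
lemma main_bound (hS : IsWeightedShift p lam S)
    (hypo : ∀ f, ‖ContinuousLinearMap.adjoint S f‖ ≤ ‖S f‖) (hw : WeightSystem p lam)
    {n : ℕ} (hn : 1 ≤ n) (f g : Hs V) :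
    (‖⟪f, (S ^ n) g⟫‖₊ : ℝ≥0∞) ≤ (‖(S ^ n) f‖₊ : ℝ≥0∞) * (‖g‖₊ : ℝ≥0∞) := by
  have hrphalf : (0:ℝ) ≤ 1/2 := by norm_num
  have hsq : ∀ x : ℝ≥0∞, (x ^ (1/2:ℝ)) ^ (2:ℕ) = x := by
    intro x
    rw [← ENNReal.rpow_natCast (x ^ (1/2:ℝ)) 2, ← ENNReal.rpow_mul]
    norm_num
  have hsq' : ∀ x : ℝ≥0∞, (x ^ (2:ℕ)) ^ (1/2:ℝ) = x := by
    intro x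
    rw [← ENNReal.rpow_natCast x 2, ← ENNReal.rpow_mul]
    norm_num
  -- step 1 : triangle inequality
  have h1 : (‖⟪f, (S ^ n) g⟫‖₊ : ℝ≥0∞)
      ≤ ∑' v, (‖(f : ∀ _ : V, ℂ) v‖₊ : ℝ≥0∞)
          * ((‖iterWeight p lam n v‖₊ : ℝ≥0∞) * (‖(g : ∀ _ : V, ℂ) (p^[n] v)‖₊ : ℝ≥0∞)) := by
    rw [inner_pow p lam S hS n f g]
    refine le_trans (nnnorm_tsum_le' _) ?_
    refine ENNReal.tsum_le_tsum fun v => ?_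
    rw [nnnorm_mul, nnnorm_mul, RCLike.nnnorm_conj]
    push_cast
    exact le_rfl
  -- step 2 : termwise bound
  have h2 : ∀ v, (‖(f : ∀ _ : V, ℂ) v‖₊ : ℝ≥0∞)
      * ((‖iterWeight p lam n v‖₊ : ℝ≥0∞) * (‖(g : ∀ _ : V, ℂ) (p^[n] v)‖₊ : ℝ≥0∞))
      ≤ ((Cfun p lam n v) ^ (1/2:ℝ) * (‖(f : ∀ _ : V, ℂ) v‖₊ : ℝ≥0∞))
        * ((Rfun p lam n v) ^ (1/2:ℝ) * (‖(g : ∀ _ : V, ℂ) (p^[n] v)‖₊ : ℝ≥0∞)) := by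
    intro v
    by_cases hΛ : iterWeight p lam n v = 0
    · rw [hΛ]
      simp
    · have hC0 : Cfun p lam n v ≠ 0 := Cfun_ne_zero p lam hfork S hS hypo hw hΛ
      have hCt : Cfun p lam n v ≠ ⊤ := Cfun_ne_top p lam S hS n v
      have hR : Rfun p lam n v
          = (‖iterWeight p lam n v‖₊ : ℝ≥0∞) ^ 2 / Cfun p lam n v := by
        rw [Rfun, if_neg hΛ]
      have key : (Cfun p lam n v) ^ (1/2:ℝ) * (Rfun p lam n v) ^ (1/2:ℝ)
          = (‖iterWeight p lam n v‖₊ : ℝ≥0∞) := by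
        rw [hR, ← ENNReal.mul_rpow_of_nonneg _ _ hrphalf,
          ENNReal.mul_div_cancel hC0 hCt, hsq']
      refine le_of_eq ?_
      calc (‖(f : ∀ _ : V, ℂ) v‖₊ : ℝ≥0∞)
          * ((‖iterWeight p lam n v‖₊ : ℝ≥0∞) * (‖(g : ∀ _ : V, ℂ) (p^[n] v)‖₊ : ℝ≥0∞))
          = ((Cfun p lam n v) ^ (1/2:ℝ) * (Rfun p lam n v) ^ (1/2:ℝ))
            * ((‖(f : ∀ _ : V, ℂ) v‖₊ : ℝ≥0∞) * (‖(g : ∀ _ : V, ℂ) (p^[n] v)‖₊ : ℝ≥0∞)) := by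
            rw [key]; ring
        _ = ((Cfun p lam n v) ^ (1/2:ℝ) * (‖(f : ∀ _ : V, ℂ) v‖₊ : ℝ≥0∞))
            * ((Rfun p lam n v) ^ (1/2:ℝ) * (‖(g : ∀ _ : V, ℂ) (p^[n] v)‖₊ : ℝ≥0∞)) := by
            ring
  -- step 4 : the `A` sum
  have h4 : ∑' v, ((Cfun p lam n v) ^ (1/2:ℝ) * (‖(f : ∀ _ : V, ℂ) v‖₊ : ℝ≥0∞)) ^ (2:ℕ)
      = (‖(S ^ n) f‖₊ : ℝ≥0∞) ^ 2 := by
    calc ∑' v, ((Cfun p lam n v) ^ (1/2:ℝ) * (‖(f : ∀ _ : V, ℂ) v‖₊ : ℝ≥0∞)) ^ (2:ℕ)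
        = ∑' v, Cfun p lam n v * (‖(f : ∀ _ : V, ℂ) v‖₊ : ℝ≥0∞) ^ (2:ℕ) := by
          refine tsum_congr fun v => ?_
          rw [mul_pow, hsq]
      _ = ∑' v, ∑' x : {w : V // p^[n] w = v},
            (‖iterWeight p lam n ↑x‖₊ : ℝ≥0∞) ^ 2
              * (‖(f : ∀ _ : V, ℂ) (p^[n] ↑x)‖₊ : ℝ≥0∞) ^ 2 := by
          refine tsum_congr fun v => ?_
          rw [Cfun, ← ENNReal.tsum_mul_right]
          exact tsum_congr fun x => by rw [x.2]
      _ = ∑' x : V, (‖iterWeight p lam n x‖₊ : ℝ≥0∞) ^ 2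
            * (‖(f : ∀ _ : V, ℂ) (p^[n] x)‖₊ : ℝ≥0∞) ^ 2 :=
          tsum_fiber (p^[n]) (fun x => (‖iterWeight p lam n x‖₊ : ℝ≥0∞) ^ 2
            * (‖(f : ∀ _ : V, ℂ) (p^[n] x)‖₊ : ℝ≥0∞) ^ 2)
      _ = (‖(S ^ n) f‖₊ : ℝ≥0∞) ^ 2 := (op_enorm_sq p lam S hS n f).symm
  -- step 5 : the `B` sum
  have h5 : ∑' v, ((Rfun p lam n v) ^ (1/2:ℝ) * (‖(g : ∀ _ : V, ℂ) (p^[n] v)‖₊ : ℝ≥0∞)) ^ (2:ℕ)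
      ≤ (‖g‖₊ : ℝ≥0∞) ^ 2 := by
    have e1 : ∑' v, ((Rfun p lam n v) ^ (1/2:ℝ) * (‖(g : ∀ _ : V, ℂ) (p^[n] v)‖₊ : ℝ≥0∞)) ^ (2:ℕ)
        = ∑' v, Rfun p lam n v * (‖(g : ∀ _ : V, ℂ) (p^[n] v)‖₊ : ℝ≥0∞) ^ (2:ℕ) := by
      refine tsum_congr fun v => ?_
      rw [mul_pow, hsq]
    rw [e1, ← tsum_fiber (p^[n]) (fun v => Rfun p lam n v * (‖(g : ∀ _ : V, ℂ) (p^[n] v)‖₊ : ℝ≥0∞) ^ (2:ℕ))]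
    rw [enorm_sq_eq g]
    refine ENNReal.tsum_le_tsum fun u => ?_
    calc ∑' x : {w : V // p^[n] w = u},
          Rfun p lam n ↑x * (‖(g : ∀ _ : V, ℂ) (p^[n] ↑x)‖₊ : ℝ≥0∞) ^ (2:ℕ)
        = ∑' x : {w : V // p^[n] w = u},
            Rfun p lam n ↑x * (‖(g : ∀ _ : V, ℂ) u‖₊ : ℝ≥0∞) ^ (2:ℕ) :=
          tsum_congr fun x => by rw [x.2]
      _ = (∑' x : {w : V // p^[n] w = u}, Rfun p lam n ↑x)
            * (‖(g : ∀ _ : V, ℂ) u‖₊ : ℝ≥0∞) ^ (2:ℕ) := ENNReal.tsum_mul_right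
      _ ≤ 1 * (‖(g : ∀ _ : V, ℂ) u‖₊ : ℝ≥0∞) ^ (2:ℕ) :=
          mul_le_mul_left (key_fiber p lam hfork S hS hypo hw hn u) _
      _ = (‖(g : ∀ _ : V, ℂ) u‖₊ : ℝ≥0∞) ^ (2:ℕ) := one_mul _
  -- assemble
  calc (‖⟪f, (S ^ n) g⟫‖₊ : ℝ≥0∞)
      ≤ ∑' v, (‖(f : ∀ _ : V, ℂ) v‖₊ : ℝ≥0∞)
          * ((‖iterWeight p lam n v‖₊ : ℝ≥0∞) * (‖(g : ∀ _ : V, ℂ) (p^[n] v)‖₊ : ℝ≥0∞)) := h1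
    _ ≤ ∑' v, ((Cfun p lam n v) ^ (1/2:ℝ) * (‖(f : ∀ _ : V, ℂ) v‖₊ : ℝ≥0∞))
          * ((Rfun p lam n v) ^ (1/2:ℝ) * (‖(g : ∀ _ : V, ℂ) (p^[n] v)‖₊ : ℝ≥0∞)) :=
        ENNReal.tsum_le_tsum h2
    _ ≤ (∑' v, ((Cfun p lam n v) ^ (1/2:ℝ) * (‖(f : ∀ _ : V, ℂ) v‖₊ : ℝ≥0∞)) ^ (2:ℕ)) ^ (1/2:ℝ)
          * (∑' v, ((Rfun p lam n v) ^ (1/2:ℝ)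
              * (‖(g : ∀ _ : V, ℂ) (p^[n] v)‖₊ : ℝ≥0∞)) ^ (2:ℕ)) ^ (1/2:ℝ) :=
        ennreal_cs _ _
    _ ≤ ((‖(S ^ n) f‖₊ : ℝ≥0∞) ^ (2:ℕ)) ^ (1/2:ℝ) * ((‖g‖₊ : ℝ≥0∞) ^ (2:ℕ)) ^ (1/2:ℝ) := by
        rw [h4]
        exact mul_le_mul_right (ENNReal.rpow_le_rpow h5 hrphalf) _
    _ = (‖(S ^ n) f‖₊ : ℝ≥0∞) * (‖g‖₊ : ℝ≥0∞) := by rw [hsq', hsq']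
end Aux

/-- Lemma (forkless-full): a bounded weighted shift on a forkless directed forest is
power hyponormal iff it is hyponormal. -/
theorem forklessFull {V : Type u} (p : V → V) (hforest : IsDirectedForest p)
    (hfork : Forkless p)
    (lam : V → ℂ) (hw : WeightSystem p lam)
    (S : Hs V →L[ℂ] Hs V) (hS : IsWeightedShift p lam S) :
    PowerHyponormal S ↔ Hyponormal S := by
  constructor
  · intro hph
    have h := hph 1 le_rfl
    rwa [pow_one] at h
  · intro hyp n hn
    have hypo : ∀ f₀ : Hs V, ‖ContinuousLinearMap.adjoint S f₀‖ ≤ ‖S f₀‖ :=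
      (hyponormal_iff_norm S).1 hyp
    rw [hyponormal_iff_norm]
    intro f
    set g : Hs V := ContinuousLinearMap.adjoint (S ^ n) f with hg
    have hb := main_bound p lam hfork S hS hypo hw hn f g
    have hin : (inner ℂ f ((S ^ n) g) : ℂ) = ((‖g‖ : ℂ)) ^ 2 := by
      rw [hg, ← ContinuousLinearMap.adjoint_inner_left (S ^ n)
        (ContinuousLinearMap.adjoint (S ^ n) f) f]
      exact inner_self_eq_norm_sq_to_K _
    have hreal : ‖(inner ℂ f ((S ^ n) g) : ℂ)‖ ≤ ‖(S ^ n) f‖ * ‖g‖ := by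
      have h2 : (‖(inner ℂ f ((S ^ n) g) : ℂ)‖₊ : ℝ≥0∞) ≤ ((‖(S ^ n) f‖₊ * ‖g‖₊ : NNReal) : ℝ≥0∞) := by
        rw [ENNReal.coe_mul]
        exact hb
      have h3 := ENNReal.coe_le_coe.1 h2
      have h4 := NNReal.coe_le_coe.2 h3
      simpa using h4
    rw [hin] at hreal
    have h5 : ‖g‖ ^ 2 ≤ ‖(S ^ n) f‖ * ‖g‖ := by
      have he : ‖((‖g‖ : ℂ)) ^ 2‖ = ‖g‖ ^ 2 := by
        rw [norm_pow, Complex.norm_real, Real.norm_eq_abs, abs_of_nonneg (norm_nonneg _)]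
      rwa [he] at hreal
    rcases eq_or_lt_of_le (norm_nonneg g) with h0 | h0
    · rw [← h0]
      exact norm_nonneg _
    · have h6 : ‖g‖ * ‖g‖ ≤ ‖(S ^ n) f‖ * ‖g‖ := by nlinarith
      exact le_of_mul_le_mul_right h6 h0

end ShiftsPaper
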